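/- Let F_0 be any friend of 𝒱* and let ℛ* be the smallest (A+BF_0)-invariant subspace containing 𝒱* ∩ B(ker D) (this subspace does not depend on the choice of the friend F_0). Assume ℛ* ≠ 0 and suppose there exists ℓ with ℛ* = 𝒱* ∩ 𝒮_ℓ; let h := min{ℓ ≥ 1 : ℛ* = 𝒱* ∩ 𝒮_ℓ}. Then the set 𝒯₂ := {q ∈ ℕ : ∃ F a friend of ℛ* such that the restriction of A+BF to ℛ* is diagonalizable and has exactly q distinct eigenvalues} is nonempty and h = min 𝒯₂. -/

import Mathlib

open Matrix Submodule

/-- The Rosenbrock matrix `[[A - λI, B], [C, D]]`. -/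
noncomputable def rosenbrock {n m p : ℕ} (A : Matrix (Fin n) (Fin n) ℂ)
    (B : Matrix (Fin n) (Fin m) ℂ) (C : Matrix (Fin p) (Fin n) ℂ)
    (D : Matrix (Fin p) (Fin m) ℂ) (lam : ℂ) :
    Matrix (Fin n ⊕ Fin p) (Fin n ⊕ Fin m) ℂ :=
  Matrix.fromBlocks (A - lam • 1) B C D

/-- `λ` is an invariant zero of `(A,B,C,D)` if the rank of the Rosenbrock matrix at `λ`
is strictly smaller than its normal rank (the max over `μ` of the rank at `μ`). -/
noncomputable def IsInvariantZero {n m p : ℕ} (A : Matrix (Fin n) (Fin n) ℂ)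
    (B : Matrix (Fin n) (Fin m) ℂ) (C : Matrix (Fin p) (Fin n) ℂ)
    (D : Matrix (Fin p) (Fin m) ℂ) (lam : ℂ) : Prop :=
  (rosenbrock A B C D lam).rank < ⨆ μ : ℂ, (rosenbrock A B C D μ).rank

/-- The Rosenbrock pencil subspace `W(λ) = {x | ∃ u, (A - λI)x + Bu = 0 ∧ Cx + Du = 0}`. -/
noncomputable def rosSub {n m p : ℕ} (A : Matrix (Fin n) (Fin n) ℂ)
    (B : Matrix (Fin n) (Fin m) ℂ) (C : Matrix (Fin p) (Fin n) ℂ)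
    (D : Matrix (Fin p) (Fin m) ℂ) (lam : ℂ) : Submodule ℂ (Fin n → ℂ) :=
  Submodule.map (LinearMap.fst ℂ (Fin n → ℂ) (Fin m → ℂ))
    (LinearMap.ker ((((A - lam • 1).mulVecLin).coprod B.mulVecLin).prod
      ((C.mulVecLin).coprod D.mulVecLin)))

/-- A subspace `𝒱` is output-nulling if it has a friend `F`, i.e.
`(A + BF) 𝒱 ⊆ 𝒱` and `𝒱 ⊆ ker (C + DF)`. -/
def IsOutputNulling {n m p : ℕ} (A : Matrix (Fin n) (Fin n) ℂ)
    (B : Matrix (Fin n) (Fin m) ℂ) (C : Matrix (Fin p) (Fin n) ℂ)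
    (D : Matrix (Fin p) (Fin m) ℂ) (V : Submodule ℂ (Fin n → ℂ)) : Prop :=
  ∃ F : Matrix (Fin m) (Fin n) ℂ,
    (∀ x ∈ V, (A + B * F).mulVecLin x ∈ V) ∧ V ≤ LinearMap.ker (C + D * F).mulVecLin

/-- The largest output-nulling subspace `𝒱*`. -/
noncomputable def vStar {n m p : ℕ} (A : Matrix (Fin n) (Fin n) ℂ)
    (B : Matrix (Fin n) (Fin m) ℂ) (C : Matrix (Fin p) (Fin n) ℂ)
    (D : Matrix (Fin p) (Fin m) ℂ) : Submodule ℂ (Fin n → ℂ) :=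
  sSup {V : Submodule ℂ (Fin n → ℂ) | IsOutputNulling A B C D V}

/-- The input-containing sequence: `𝒮_0 = 0`,
`𝒮_{j+1} = {Ax + Bu : x ∈ 𝒮_j, Cx + Du = 0}`. -/
noncomputable def sSeq {n m p : ℕ} (A : Matrix (Fin n) (Fin n) ℂ)
    (B : Matrix (Fin n) (Fin m) ℂ) (C : Matrix (Fin p) (Fin n) ℂ)
    (D : Matrix (Fin p) (Fin m) ℂ) : ℕ → Submodule ℂ (Fin n → ℂ)
  | 0 => ⊥
  | (j + 1) => Submodule.map ((A.mulVecLin).coprod B.mulVecLin)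
      (((sSeq A B C D j).prod ⊤) ⊓ LinearMap.ker ((C.mulVecLin).coprod D.mulVecLin))

/-- Diagonalizable endomorphism: the eigenspaces span the whole space. -/
def IsDiagonalizable {M : Type*} [AddCommGroup M] [Module ℂ M]
    (f : M →ₗ[ℂ] M) : Prop :=
  (⨆ μ : ℂ, Module.End.eigenspace f μ) = ⊤


/-
Write `M = A + BF₀` and `W = 𝒱* ∩ B(ker D)`. Maximality of `𝒱*` identifies `𝒱* ∩ 𝒮_j` with the
Krylov space `W + MW + ⋯ + M^(j-1) W`, so `h` is the first step at which this sequence reaches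
`ℛ*`. Another friend `F` of `ℛ*` changes `M` on `ℛ*` only by a map into `W`, which leaves the
Krylov sequence unchanged; if `(A + BF)|ℛ*` is diagonalizable with `q` eigenvalues it is
annihilated by a polynomial of degree `q`, so the sequence is stationary from step `q` on and
`h ≤ q`. Conversely, for `h` scalars `μ` that are not eigenvalues of `M|ℛ*`, the vectors `x` with
`(M - μ) x ∈ W` span `ℛ*`, and a feedback with values in `B(ker D)` turns a basis of such vectors
into eigenvectors, which gives a friend with at most `h` eigenvalues.
-/

section Krylov

open Polynomial

variable {K E : Type*} [CommRing K] [AddCommGroup E] [Module K E]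

def krylov (g : Module.End K E) (W : Submodule K E) (j : ℕ) : Submodule K E :=
  ⨆ i < j, W.map (g ^ i)

variable {g : Module.End K E} {W : Submodule K E}

@[simp]
theorem krylov_zero : krylov g W 0 = ⊥ := by
  simp [krylov]

theorem krylov_succ (j : ℕ) : krylov g W (j + 1) = W ⊔ (krylov g W j).map g := by
  simp only [krylov, Nat.iSup_lt_succ', pow_zero, Module.End.one_eq_id, Submodule.map_id,
    Submodule.map_iSup, ← Submodule.map_comp, pow_succ', Module.End.mul_eq_comp]

theorem krylov_le {T : Submodule K E} (hWT : W ≤ T) (hT : ∀ x ∈ T, g x ∈ T) (j : ℕ) :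
    krylov g W j ≤ T := by
  induction j with
  | zero => simp
  | succ j ih =>
    rw [krylov_succ]
    exact sup_le hWT (Submodule.map_le_iff_le_comap.2 fun x hx => hT x (ih hx))

theorem aeval_apply_mem_krylov {p : K[X]} {j : ℕ} (hp : p.degree < j) {w : E} (hw : w ∈ W) :
    aeval g p w ∈ krylov g W j := by
  rcases eq_or_ne p 0 with rfl | hp0
  · simp
  rw [aeval_eq_sum_range' ((natDegree_lt_iff_degree_lt hp0).2 hp), LinearMap.sum_apply]
  exact Submodule.sum_mem _ fun i hi => Submodule.smul_mem _ _ <|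
    Submodule.mem_iSup_of_mem i <| Submodule.mem_iSup_of_mem (Finset.mem_range.1 hi) <|
      Submodule.mem_map_of_mem hw

theorem krylov_le_krylov_natDegree [Nontrivial K] {P : K[X]} (hP : P.Monic)
    (hgP : aeval g P = 0) (j : ℕ) : krylov g W j ≤ krylov g W P.natDegree := by
  refine iSup₂_le fun i _ => Submodule.map_le_iff_le_comap.2 fun w hw => ?_
  have hdeg : (X ^ i %ₘ P).degree < P.natDegree :=
    (degree_eq_natDegree hP.ne_zero) ▸ degree_modByMonic_lt _ hP
  simpa [aeval_modByMonic_eq_self_of_root hgP] using aeval_apply_mem_krylov (g := g) hdeg hw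

theorem map_krylov {E' : Type*} [AddCommGroup E'] [Module K E'] {g' : Module.End K E'}
    (f : E →ₗ[K] E') (hf : f ∘ₗ g = g' ∘ₗ f) (j : ℕ) :
    (krylov g W j).map f = krylov g' (W.map f) j := by
  have hpow : ∀ i : ℕ, f ∘ₗ (g ^ i) = (g' ^ i) ∘ₗ f := by
    intro i
    induction i with
    | zero => rfl
    | succ i ih =>
      rw [pow_succ, pow_succ, Module.End.mul_eq_comp, Module.End.mul_eq_comp,
        ← LinearMap.comp_assoc, ih, LinearMap.comp_assoc, hf, LinearMap.comp_assoc]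
  simp only [krylov, Submodule.map_iSup, ← Submodule.map_comp, hpow]

theorem sup_map_le_sup_map {M N : Module.End K E} {T : Submodule K E}
    (hMN : ∀ x ∈ T, N x - M x ∈ W) : W ⊔ T.map N ≤ W ⊔ T.map M := by
  refine sup_le le_sup_left (Submodule.map_le_iff_le_comap.2 fun x hx => ?_)
  rw [Submodule.mem_comap, ← sub_add_cancel (N x) (M x)]
  exact Submodule.add_mem_sup (hMN x hx) (Submodule.mem_map_of_mem hx)

theorem krylov_congr {M N : Module.End K E} {R : Submodule K E} (hWR : W ≤ R)
    (hMR : ∀ x ∈ R, M x ∈ R) (hMN : ∀ x ∈ R, N x - M x ∈ W) (j : ℕ) :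
    krylov N W j = krylov M W j := by
  induction j with
  | zero => simp
  | succ j ih =>
    have hle := krylov_le hWR hMR j
    rw [krylov_succ, krylov_succ, ih]
    refine le_antisymm (sup_map_le_sup_map fun x hx => hMN x (hle hx))
      (sup_map_le_sup_map fun x hx => ?_)
    rw [← neg_sub]
    exact W.neg_mem (hMN x (hle hx))

end Krylov

section Diagonalizable

open Polynomial Module.End Lagrange

variable {E : Type*} [AddCommGroup E] [Module ℂ E] {f : Module.End ℂ E}

theorem aeval_nodal_eigenvalues_eq_zero [FiniteDimensional ℂ E] (hf : IsDiagonalizable f) :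
    aeval f (nodal (finite_hasEigenvalue f).toFinset id) = 0 := by
  rw [← LinearMap.ker_eq_top, eq_top_iff, ← hf]
  refine iSup_le fun μ x hx => ?_
  rcases eq_or_ne x 0 with rfl | hx0
  · exact Submodule.zero_mem _
  have hv : f.HasEigenvector μ x := ⟨hx, hx0⟩
  have hμ : μ ∈ (finite_hasEigenvalue f).toFinset :=
    (finite_hasEigenvalue f).mem_toFinset.2 (hasEigenvalue_of_hasEigenvector hv)
  rw [LinearMap.mem_ker, aeval_apply_of_hasEigenvector hv, eval_nodal,
    Finset.prod_eq_zero (f := fun i => μ - id i) hμ (sub_self μ), zero_smul]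

theorem biSup_eigenspace_range_eq_top {ι : Type*} (b : Module.Basis ι ℂ E) {μ : ι → ℂ}
    (hb : ∀ i, f (b i) = μ i • b i) : ⨆ ν ∈ Set.range μ, f.eigenspace ν = ⊤ := by
  rw [eq_top_iff, ← b.span_eq, Submodule.span_le]
  rintro _ ⟨i, rfl⟩
  exact Submodule.mem_iSup_of_mem (μ i) <| Submodule.mem_iSup_of_mem ⟨i, rfl⟩ <|
    mem_eigenspace_iff.2 (hb i)

theorem isDiagonalizable_of_basis {ι : Type*} (b : Module.Basis ι ℂ E) {μ : ι → ℂ}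
    (hb : ∀ i, f (b i) = μ i • b i) : IsDiagonalizable f :=
  top_le_iff.1 <| biSup_eigenspace_range_eq_top b hb ▸ iSup₂_le_iSup _ _

theorem mem_range_of_hasEigenvalue_of_basis {ι : Type*} (b : Module.Basis ι ℂ E) {μ : ι → ℂ}
    (hb : ∀ i, f (b i) = μ i • b i) {ν : ℂ} (hν : f.HasEigenvalue ν) : ν ∈ Set.range μ := by
  by_contra hνμ
  have := (eigenspaces_iSupIndep f).disjoint_biSup hνμ
  rw [biSup_eigenspace_range_eq_top b hb, disjoint_top] at this
  exact hν this

theorem krylov_le_krylov_ncard_eigenvalues {M N : Module.End ℂ E} {W R : Submodule ℂ E}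
    [FiniteDimensional ℂ R] (hWR : W ≤ R) (hMR : ∀ x ∈ R, M x ∈ R) (hNR : ∀ x ∈ R, N x ∈ R)
    (hNM : ∀ x ∈ R, N x - M x ∈ W) (hN : IsDiagonalizable (N.restrict hNR)) (j : ℕ) :
    krylov M W j ≤ krylov M W {μ | HasEigenvalue (N.restrict hNR) μ}.ncard := by
  have hW : (W.comap R.subtype).map R.subtype = W := by
    rw [Submodule.map_comap_subtype, inf_eq_right.2 hWR]
  have hdeg : (nodal (finite_hasEigenvalue (N.restrict hNR)).toFinset id).natDegree =
      {μ | HasEigenvalue (N.restrict hNR) μ}.ncard := by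
    rw [natDegree_nodal, Set.ncard_eq_toFinset_card _ (finite_hasEigenvalue _)]
  have hsub := map_krylov (g := N.restrict hNR) (g' := N) (W := W.comap R.subtype) R.subtype rfl
  rw [← krylov_congr hWR hMR hNM, ← krylov_congr hWR hMR hNM, ← hW, ← hsub, ← hsub, ← hdeg]
  exact Submodule.map_mono <|
    krylov_le_krylov_natDegree nodal_monic (aeval_nodal_eigenvalues_eq_zero hN) j

end Diagonalizable

section PolePlacement

open Polynomial Module.End Lagrange

variable {K E : Type*} [Field K] [AddCommGroup E] [Module K E] {g : Module.End K E}

theorem injective_sub_smul_one_of_not_hasEigenvalue {μ : K} (hμ : ¬ g.HasEigenvalue μ) :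
    Function.Injective (g - μ • 1 : Module.End K E) := by
  rw [← LinearMap.ker_eq_bot, ← eigenspace_def]
  exact not_not.1 hμ

theorem injective_aeval_nodal {s : Finset K} (hs : ∀ μ ∈ s, ¬ g.HasEigenvalue μ) :
    Function.Injective (aeval g (nodal s id)) := by
  refine Finset.prod_induction _ (fun P => Function.Injective (aeval g P))
    (fun _ _ h h' => by simpa only [map_mul, Module.End.coe_mul] using h.comp h')
    (by simpa only [map_one, Module.End.coe_one] using Function.injective_id)
    fun μ hμ => ?_
  simpa [Algebra.algebraMap_eq_smul_one] using
    injective_sub_smul_one_of_not_hasEigenvalue (hs μ hμ)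

/-- Partial fractions: `X ^ i / ∏ (X - μ)` is a combination of the `1 / (X - μ)` for `i < #s`, so
`g ^ i W` lies in the image under `∏ (g - μ)` of the span of the `x` with `(g - μ) x ∈ W`. -/
theorem span_sub_smul_mem_eq_top [FiniteDimensional K E] {W : Submodule K E} {s : Finset K}
    (hs : ∀ μ ∈ s, ¬ g.HasEigenvalue μ) (hW : krylov g W s.card = ⊤) :
    Submodule.span K {x | ∃ μ ∈ s, g x - μ • x ∈ W} = ⊤ := by
  classical
  set U := Submodule.span K {x | ∃ μ ∈ s, g x - μ • x ∈ W}
  set Q := aeval g (nodal s id)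
  have hnodal : ∀ μ ∈ s, ∀ w ∈ W, aeval g (nodal (s.erase μ) id) w ∈ U.map Q := by
    intro μ hμ w hw
    obtain ⟨x, rfl⟩ := LinearMap.injective_iff_surjective.1
      (injective_sub_smul_one_of_not_hasEigenvalue (hs μ hμ)) w
    refine ⟨x, Submodule.subset_span ⟨μ, hμ, hw⟩, ?_⟩
    simp [Q, nodal_eq_mul_nodal_erase hμ, mul_comm (X - C μ), Algebra.algebraMap_eq_smul_one]
  have hkry : krylov g W s.card ≤ U.map Q := by
    refine iSup₂_le fun i hi => Submodule.map_le_iff_le_comap.2 fun w hw => ?_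
    have hXi : (X ^ i : K[X]).degree < s.card := by
      rw [degree_X_pow]; exact_mod_cast hi
    rw [Submodule.mem_comap, ← aeval_X_pow (R := K), eq_interpolate (Set.injOn_id _) hXi,
      interpolate_apply, map_sum, LinearMap.sum_apply]
    refine Submodule.sum_mem _ fun μ hμ => ?_
    rw [basis_eq_prod_sub_inv_mul_nodal_div hμ, ← nodal_erase_eq_nodal_div hμ, ← mul_assoc,
      ← C_mul, map_mul, aeval_C, Module.End.mul_apply, Module.algebraMap_end_apply]
    exact Submodule.smul_mem _ _ (hnodal μ hμ w hw)
  refine eq_top_iff.2 fun x _ => ?_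
  obtain ⟨u, hu, hux⟩ := hkry (hW ▸ Submodule.mem_top : Q x ∈ krylov g W s.card)
  exact injective_aeval_nodal hs hux ▸ hu

theorem exists_finset_span_sub_smul_mem_eq_top [Infinite K] {M : Module.End K E}
    {W R : Submodule K E} [FiniteDimensional K R] (hWR : W ≤ R) (hMR : ∀ x ∈ R, M x ∈ R)
    {h : ℕ} (hR : krylov M W h = R) :
    ∃ s : Finset K, s.card = h ∧
      Submodule.span K {x : R | ∃ μ ∈ s, M x - μ • (x : E) ∈ W} = ⊤ := by
  obtain ⟨s, hs, rfl⟩ :=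
    (finite_hasEigenvalue (M.restrict hMR)).infinite_compl.exists_subset_card_eq h
  have hkry : krylov (M.restrict hMR) (W.comap R.subtype) s.card = ⊤ := by
    refine Submodule.map_injective_of_injective R.injective_subtype ?_
    rw [map_krylov (g' := M) R.subtype rfl, Submodule.map_comap_subtype, inf_eq_right.2 hWR, hR,
      Submodule.map_top, Submodule.range_subtype]
  refine ⟨s, rfl, ?_⟩
  simpa using span_sub_smul_mem_eq_top hs hkry

end PolePlacement

theorem Submodule.le_of_basis_mem {K E ι : Type*} [Semiring K] [AddCommMonoid E] [Module K E]
    {P S : Submodule K E} (b : Module.Basis ι K P) (hb : ∀ i, (b i : E) ∈ S) : P ≤ S := by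
  intro x hx
  have hspan : Submodule.span K (Set.range b) ≤ S.comap P.subtype :=
    Submodule.span_le.2 (Set.range_subset_iff.2 hb)
  exact hspan (b.span_eq ▸ Submodule.mem_top : (⟨x, hx⟩ : P) ∈ Submodule.span K (Set.range b))

theorem exists_matrix_mulVec_basis {K ι : Type*} [Field K] {n m : ℕ}
    {P : Submodule K (Fin n → K)} (b : Module.Basis ι K P) (u : ι → Fin m → K) :
    ∃ G : Matrix (Fin m) (Fin n) K, ∀ i, G *ᵥ (b i : Fin n → K) = u i := by
  obtain ⟨G, hG⟩ := LinearMap.exists_extend (b.constr K u)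
  refine ⟨LinearMap.toMatrix' G, fun i => ?_⟩
  rw [LinearMap.toMatrix'_mulVec, ← b.constr_basis K u i, ← hG]
  rfl

theorem Matrix.add_mul_mulVec {R k l o : Type*} [NonUnitalSemiring R] [Fintype l] [Fintype o]
    (X : Matrix k l R) (Y : Matrix k o R) (F : Matrix o l R) (x : l → R) :
    (X + Y * F) *ᵥ x = X *ᵥ x + Y *ᵥ (F *ᵥ x) := by
  rw [Matrix.add_mulVec, Matrix.mulVec_mulVec]

section OutputNulling

variable {n m p : ℕ} {A : Matrix (Fin n) (Fin n) ℂ} {B : Matrix (Fin n) (Fin m) ℂ}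
  {C : Matrix (Fin p) (Fin n) ℂ} {D : Matrix (Fin p) (Fin m) ℂ}

theorem isOutputNulling_of_forall_exists {P : Submodule ℂ (Fin n → ℂ)}
    (hP : ∀ x ∈ P, ∃ u, A *ᵥ x + B *ᵥ u ∈ P ∧ C *ᵥ x + D *ᵥ u = 0) :
    IsOutputNulling A B C D P := by
  let b := Module.Basis.ofVectorSpace ℂ P
  choose u hu using fun i => hP _ (b i).2
  obtain ⟨G, hG⟩ := exists_matrix_mulVec_basis b u
  have hle : P ≤ P.comap (A + B * G).mulVecLin ⊓ LinearMap.ker (C + D * G).mulVecLin :=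
    Submodule.le_of_basis_mem b fun i => by simp [hG, hu i]
  exact ⟨G, fun x hx => (hle hx).1, fun x hx => (hle hx).2⟩

theorem mem_sSeq_succ {j : ℕ} {z : Fin n → ℂ} :
    z ∈ sSeq A B C D (j + 1) ↔
      ∃ x ∈ sSeq A B C D j, ∃ u, C *ᵥ x + D *ᵥ u = 0 ∧ A *ᵥ x + B *ᵥ u = z := by
  simp [sSeq, and_assoc, exists_and_left]

theorem mem_vStar_of_add_mulVec_mem (hV : IsOutputNulling A B C D (vStar A B C D))
    {x : Fin n → ℂ} {u : Fin m → ℂ} (hxu : A *ᵥ x + B *ᵥ u ∈ vStar A B C D)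
    (h0 : C *ᵥ x + D *ᵥ u = 0) : x ∈ vStar A B C D := by
  set P := ((vStar A B C D).comap (A.mulVecLin.coprod B.mulVecLin) ⊓
    LinearMap.ker (C.mulVecLin.coprod D.mulVecLin)).map (LinearMap.fst ℂ _ (Fin m → ℂ))
  have hmem : ∀ y, y ∈ P ↔ ∃ u, A *ᵥ y + B *ᵥ u ∈ vStar A B C D ∧ C *ᵥ y + D *ᵥ u = 0 := by
    simp [P]
  obtain ⟨F, hFinv, hFker⟩ := hV
  have hVP : vStar A B C D ≤ P := fun y hy =>
    (hmem y).2 ⟨F *ᵥ y, by simpa [add_mul_mulVec] using hFinv y hy,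
      by simpa [add_mul_mulVec] using hFker hy⟩
  have hP : IsOutputNulling A B C D P := isOutputNulling_of_forall_exists fun y hy =>
    let ⟨u, h1, h2⟩ := (hmem y).1 hy
    ⟨u, hVP h1, h2⟩
  exact le_sSup (s := {V | IsOutputNulling A B C D V}) hP ((hmem x).2 ⟨u, hxu, h0⟩)

theorem mulVec_sub_mem_map_ker {x : Fin n → ℂ} {u u' : Fin m → ℂ} (hu : C *ᵥ x + D *ᵥ u = 0)
    (hu' : C *ᵥ x + D *ᵥ u' = 0) :
    B *ᵥ u - B *ᵥ u' ∈ Submodule.map B.mulVecLin (LinearMap.ker D.mulVecLin) := by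
  refine ⟨u - u', ?_, by simp [mulVec_sub]⟩
  rw [SetLike.mem_coe, LinearMap.mem_ker, mulVecLin_apply, mulVec_sub]
  linear_combination hu - hu'

theorem add_mul_mulVecLin_sub_mem_map_ker {F F' : Matrix (Fin m) (Fin n) ℂ} {x : Fin n → ℂ}
    (hF : x ∈ LinearMap.ker (C + D * F).mulVecLin)
    (hF' : x ∈ LinearMap.ker (C + D * F').mulVecLin) :
    (A + B * F).mulVecLin x - (A + B * F').mulVecLin x ∈
      Submodule.map B.mulVecLin (LinearMap.ker D.mulVecLin) := by
  have hFx : C *ᵥ x + D *ᵥ (F *ᵥ x) = 0 := by rw [← add_mul_mulVec]; exact hF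
  have hF'x : C *ᵥ x + D *ᵥ (F' *ᵥ x) = 0 := by rw [← add_mul_mulVec]; exact hF'
  have hdiff : (A + B * F) *ᵥ x - (A + B * F') *ᵥ x = B *ᵥ (F *ᵥ x) - B *ᵥ (F' *ᵥ x) := by
    rw [add_mul_mulVec, add_mul_mulVec]; abel
  exact hdiff ▸ mulVec_sub_mem_map_ker hFx hF'x

theorem inf_sSeq_eq_krylov {F₀ : Matrix (Fin m) (Fin n) ℂ}
    (hF₀inv : ∀ x ∈ vStar A B C D, (A + B * F₀).mulVecLin x ∈ vStar A B C D)
    (hF₀ker : vStar A B C D ≤ LinearMap.ker (C + D * F₀).mulVecLin) (j : ℕ) :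
    vStar A B C D ⊓ sSeq A B C D j = krylov (A + B * F₀).mulVecLin
      (vStar A B C D ⊓ Submodule.map B.mulVecLin (LinearMap.ker D.mulVecLin)) j := by
  have hF₀ : ∀ x ∈ vStar A B C D, C *ᵥ x + D *ᵥ (F₀ *ᵥ x) = 0 := fun x hx => by
    simpa [add_mul_mulVec] using hF₀ker hx
  induction j with
  | zero => simp [sSeq]
  | succ j ih =>
    rw [krylov_succ, ← ih]
    refine le_antisymm (fun z hz => ?_) (sup_le ?_ ?_)
    · obtain ⟨hzV, hzS⟩ := Submodule.mem_inf.1 hz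
      obtain ⟨x, hx, u, h0, rfl⟩ := mem_sSeq_succ.1 hzS
      have hxV := mem_vStar_of_add_mulVec_mem ⟨F₀, hF₀inv, hF₀ker⟩ hzV h0
      rw [← sub_add_cancel (A *ᵥ x + B *ᵥ u) ((A + B * F₀).mulVecLin x)]
      refine Submodule.add_mem_sup ⟨sub_mem hzV (hF₀inv x hxV), ?_⟩
        (Submodule.mem_map_of_mem ⟨hxV, hx⟩)
      simpa [add_mul_mulVec] using mulVec_sub_mem_map_ker (B := B) h0 (hF₀ x hxV)
    · rintro _ ⟨hwV, u, hu, rfl⟩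
      exact ⟨hwV, mem_sSeq_succ.2 ⟨0, zero_mem _, u, by simpa using hu, by simp⟩⟩
    · rintro _ ⟨x, ⟨hxV, hxS⟩, rfl⟩
      exact ⟨hF₀inv x hxV, mem_sSeq_succ.2 ⟨x, hxS, F₀ *ᵥ x, hF₀ x hxV, by simp⟩⟩

theorem exists_friend_isDiagonalizable {R W : Submodule ℂ (Fin n → ℂ)}
    (hW : W ≤ Submodule.map B.mulVecLin (LinearMap.ker D.mulVecLin))
    {F₀ : Matrix (Fin m) (Fin n) ℂ} (hF₀ker : R ≤ LinearMap.ker (C + D * F₀).mulVecLin)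
    {s : Finset ℂ}
    (hs : Submodule.span ℂ {x : R | ∃ μ ∈ s, (A + B * F₀).mulVecLin x - μ • (x : Fin n → ℂ) ∈ W}
      = ⊤) :
    ∃ (F : Matrix (Fin m) (Fin n) ℂ) (hinv : ∀ x ∈ R, (A + B * F).mulVecLin x ∈ R),
      R ≤ LinearMap.ker (C + D * F).mulVecLin ∧
      IsDiagonalizable ((A + B * F).mulVecLin.restrict hinv) ∧
      {μ : ℂ | Module.End.HasEigenvalue ((A + B * F).mulVecLin.restrict hinv) μ} ⊆ s := by
  have hb := Module.Basis.ofSpan_subset hs.ge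
  generalize Module.Basis.ofSpan hs.ge = b at hb
  choose μ hμs hμ using fun i => hb ⟨i, rfl⟩
  choose u hu hBu using fun i => hW (hμ i)
  obtain ⟨G, hG⟩ := exists_matrix_mulVec_basis b (fun i => -u i)
  have heig : ∀ i, (A + B * (F₀ + G)) *ᵥ (b i : Fin n → ℂ) = μ i • (b i : Fin n → ℂ) := by
    intro i
    have hBui : B *ᵥ u i = (A + B * F₀) *ᵥ (b i : Fin n → ℂ) - μ i • (b i : Fin n → ℂ) := hBu i
    rw [Matrix.mul_add, ← add_assoc, add_mul_mulVec, hG, mulVec_neg, hBui]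
    abel
  have hker : ∀ i, (C + D * (F₀ + G)) *ᵥ (b i : Fin n → ℂ) = 0 := by
    intro i
    have hF₀i : (C + D * F₀) *ᵥ (b i : Fin n → ℂ) = 0 := hF₀ker (b i).2
    have hui : D *ᵥ u i = 0 := hu i
    rw [Matrix.mul_add, ← add_assoc, add_mul_mulVec, hG, mulVec_neg, hF₀i, hui, neg_zero,
      add_zero]
  have hinv : ∀ x ∈ R, (A + B * (F₀ + G)).mulVecLin x ∈ R :=
    Submodule.le_of_basis_mem (S := R.comap _) b fun i => by
      change (A + B * (F₀ + G)) *ᵥ (b i : Fin n → ℂ) ∈ R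
      exact heig i ▸ R.smul_mem (μ i) (b i).2
  have hres : ∀ i, (A + B * (F₀ + G)).mulVecLin.restrict hinv (b i) = μ i • b i :=
    fun i => Subtype.ext (heig i)
  refine ⟨F₀ + G, hinv, Submodule.le_of_basis_mem b hker, isDiagonalizable_of_basis b hres,
    fun ν hν => ?_⟩
  obtain ⟨i, rfl⟩ := mem_range_of_hasEigenvalue_of_basis b hres hν
  exact hμs i

end OutputNulling

theorem min_steps_rStar_eq_min_distinct_eigs_general (n m p : ℕ)
    (A : Matrix (Fin n) (Fin n) ℂ) (B : Matrix (Fin n) (Fin m) ℂ)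
    (C : Matrix (Fin p) (Fin n) ℂ) (D : Matrix (Fin p) (Fin m) ℂ)
    -- F₀ is a friend of 𝒱*
    (F₀ : Matrix (Fin m) (Fin n) ℂ)
    (hF₀inv : ∀ x ∈ vStar A B C D, (A + B * F₀).mulVecLin x ∈ vStar A B C D)
    (hF₀ker : vStar A B C D ≤ LinearMap.ker (C + D * F₀).mulVecLin)
    -- ℛ* : the smallest (A + BF₀)-invariant subspace containing 𝒱* ∩ B(ker D)
    (Rstar : Submodule ℂ (Fin n → ℂ))
    (hRstar : Rstar = sInf {W : Submodule ℂ (Fin n → ℂ) |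
      vStar A B C D ⊓ Submodule.map B.mulVecLin (LinearMap.ker D.mulVecLin) ≤ W ∧
      Submodule.map (A + B * F₀).mulVecLin W ≤ W})
    (hRne : Rstar ≠ ⊥)
    (h : ℕ)
    (hmin : IsLeast {ℓ : ℕ | 1 ≤ ℓ ∧ Rstar = vStar A B C D ⊓ sSeq A B C D ℓ} h) :
    IsLeast {q : ℕ | ∃ (F : Matrix (Fin m) (Fin n) ℂ)
        (hinv : ∀ x ∈ Rstar, (A + B * F).mulVecLin x ∈ Rstar),
        Rstar ≤ LinearMap.ker (C + D * F).mulVecLin ∧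
        IsDiagonalizable ((A + B * F).mulVecLin.restrict hinv) ∧
        {μ : ℂ | Module.End.HasEigenvalue ((A + B * F).mulVecLin.restrict hinv) μ}.ncard = q}
      h := by
  set T := {q : ℕ | ∃ (F : Matrix (Fin m) (Fin n) ℂ)
    (hinv : ∀ x ∈ Rstar, (A + B * F).mulVecLin x ∈ Rstar),
    Rstar ≤ LinearMap.ker (C + D * F).mulVecLin ∧
    IsDiagonalizable ((A + B * F).mulVecLin.restrict hinv) ∧
    {μ : ℂ | Module.End.HasEigenvalue ((A + B * F).mulVecLin.restrict hinv) μ}.ncard = q}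
  set M := (A + B * F₀).mulVecLin
  set W := vStar A B C D ⊓ Submodule.map B.mulVecLin (LinearMap.ker D.mulVecLin)
  have hWR : W ≤ Rstar := hRstar ▸ le_sInf fun _ hT => hT.1
  have hMR : ∀ x ∈ Rstar, M x ∈ Rstar := fun x hx => by
    rw [hRstar] at hx ⊢
    exact le_sInf (fun U hU => (Submodule.map_mono (sInf_le hU)).trans hU.2)
      (Submodule.mem_map_of_mem hx)
  have hRV : Rstar ≤ vStar A B C D := hmin.1.2 ▸ inf_le_left
  have hkry := inf_sSeq_eq_krylov hF₀inv hF₀ker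
  have hR : krylov M W h = Rstar := (hkry h).symm.trans hmin.1.2.symm
  have hlower : h ∈ lowerBounds T := by
    rintro _ ⟨F, hinv, hker, hdiag, rfl⟩
    have hFM : ∀ x ∈ Rstar, (A + B * F).mulVecLin x - M x ∈ W := fun x hx =>
      ⟨sub_mem (hRV (hinv x hx)) (hF₀inv x (hRV hx)),
        add_mul_mulVecLin_sub_mem_map_ker (hker hx) (hF₀ker (hRV hx))⟩
    have hq := le_antisymm (krylov_le hWR hMR _)
      (hR ▸ krylov_le_krylov_ncard_eigenvalues hWR hMR hinv hFM hdiag h)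
    refine hmin.2 ⟨Nat.one_le_iff_ne_zero.2 fun h0 => hRne ?_, by rw [hkry, hq]⟩
    rw [← hq, h0, krylov_zero]
  obtain ⟨s, hs, hspan⟩ := exists_finset_span_sub_smul_mem_eq_top hWR hMR hR
  obtain ⟨F, hinv, hker, hdiag, hsub⟩ :=
    exists_friend_isDiagonalizable inf_le_right (hRV.trans hF₀ker) hspan
  have hF : _ ∈ T := ⟨F, hinv, hker, hdiag, rfl⟩
  have hcard := (Set.ncard_le_ncard hsub s.finite_toSet).trans_eq (Set.ncard_coe_finset s)
  exact ⟨le_antisymm (hs ▸ hcard) (hlower hF) ▸ hF, hlower⟩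

theorem min_steps_rStar_eq_min_distinct_eigs (n m p : ℕ)
    (hn : 0 < n) (hm : 0 < m) (hp : 0 < p)
    (A : Matrix (Fin n) (Fin n) ℂ) (B : Matrix (Fin n) (Fin m) ℂ)
    (C : Matrix (Fin p) (Fin n) ℂ) (D : Matrix (Fin p) (Fin m) ℂ)
    -- F₀ is a friend of 𝒱*
    (F₀ : Matrix (Fin m) (Fin n) ℂ)
    (hF₀inv : ∀ x ∈ vStar A B C D, (A + B * F₀).mulVecLin x ∈ vStar A B C D)
    (hF₀ker : vStar A B C D ≤ LinearMap.ker (C + D * F₀).mulVecLin)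
    -- ℛ* : the smallest (A + BF₀)-invariant subspace containing 𝒱* ∩ B(ker D)
    (Rstar : Submodule ℂ (Fin n → ℂ))
    (hRstar : Rstar = sInf {W : Submodule ℂ (Fin n → ℂ) |
      vStar A B C D ⊓ Submodule.map B.mulVecLin (LinearMap.ker D.mulVecLin) ≤ W ∧
      Submodule.map (A + B * F₀).mulVecLin W ≤ W})
    (hRne : Rstar ≠ ⊥)
    (h : ℕ)
    (hmin : IsLeast {ℓ : ℕ | 1 ≤ ℓ ∧ Rstar = vStar A B C D ⊓ sSeq A B C D ℓ} h) :
    IsLeast {q : ℕ | ∃ (F : Matrix (Fin m) (Fin n) ℂ)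
        (hinv : ∀ x ∈ Rstar, (A + B * F).mulVecLin x ∈ Rstar),
        Rstar ≤ LinearMap.ker (C + D * F).mulVecLin ∧
        IsDiagonalizable ((A + B * F).mulVecLin.restrict hinv) ∧
        {μ : ℂ | Module.End.HasEigenvalue ((A + B * F).mulVecLin.restrict hinv) μ}.ncard = q}
      h :=
  min_steps_rStar_eq_min_distinct_eigs_general n m p A B C D F₀ hF₀inv hF₀ker Rstar hRstar hRne h
    hmin
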